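/- arXiv:1210.4253 — 3 statements merged into one kernel-verified Lean document; each statement's English description precedes it below -/
import Mathlib

section
/- Let $n \ge 1$. In the polynomial ring $\mathbb{Z}[X_1,\dots,X_n]$, the coefficient of the monomial $X_1^{n-1} X_2^{n-1} \cdots X_n^{n-1}$ in the polynomial $\prod_{i \neq j} (X_i - X_j)$ (product over all ordered pairs $(i,j)$ with $i \neq j$) equals $n!$. -/
/-!
Split the pairs `i ≠ j` into `i > j` and `i < j`: the product becomes `V(X) · V(X ∘ rev)` for the
Vandermonde determinant `V(X) = ∑_σ sign σ ∏_i X_{σ i}^i`. The monomial of the `σ`-term has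
exponent `σ⁻¹ k` at `X_k`, so a pair `(σ, τ)` of terms contributes to `∏_k X_k^(n-1)` exactly when
`σ⁻¹ k + τ⁻¹ k = n - 1` for all `k`, i.e. `τ = σ ∘ rev`. Each of the `n!` such pairs contributes
`sign σ · sign (rev⁻¹ σ rev) = 1`.
-/

open MvPolynomial Finset Equiv Matrix

variable {R : Type*} [CommRing R] {n : ℕ}

theorem det_vandermonde_eq_prod_ite (v : Fin n → R) :
    (vandermonde v).det = ∏ i, ∏ j, if j < i then v i - v j else 1 := by
  rw [det_vandermonde, Finset.prod_comm]
  refine Fintype.prod_congr _ _ fun j => ?_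
  rw [← Finset.prod_filter]
  congr 1
  ext; simp

theorem det_vandermonde_rev_eq_prod_ite (v : Fin n → R) :
    (vandermonde (v ∘ Fin.rev)).det = ∏ i, ∏ j, if i < j then v i - v j else 1 := by
  rw [det_vandermonde_eq_prod_ite]
  refine Fintype.prod_equiv Fin.revPerm _ _ fun j => Fintype.prod_equiv Fin.revPerm _ _ fun i => ?_
  simp [Fin.rev_lt_rev]

theorem prod_offDiag_sub_eq_det_vandermonde_mul (v : Fin n → R) :
    ∏ p ∈ univ.filter (fun p : Fin n × Fin n => p.1 ≠ p.2), (v p.1 - v p.2) =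
      (vandermonde v).det * (vandermonde (v ∘ Fin.rev)).det := by
  rw [det_vandermonde_eq_prod_ite, det_vandermonde_rev_eq_prod_ite, ← Finset.prod_mul_distrib,
    Finset.prod_filter, Fintype.prod_prod_type]
  refine Fintype.prod_congr _ _ fun i => ?_
  rw [← Finset.prod_mul_distrib]
  refine Fintype.prod_congr _ _ fun j => ?_
  rcases lt_trichotomy i j with h | rfl | h
  · simp [h, h.ne, h.not_gt]
  · simp
  · simp [h, h.ne', h.not_gt]

noncomputable def vandermondeExponent (σ : Perm (Fin n)) : Fin n →₀ ℕ :=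
  Finsupp.equivFunOnFinite.symm fun k => σ.symm k

theorem prod_X_pow_eq_monomial_vandermondeExponent (σ : Perm (Fin n)) :
    ∏ i, (X (σ i) : MvPolynomial (Fin n) R) ^ (i : ℕ) = monomial (vandermondeExponent σ) 1 := by
  rw [monomial_eq, C_1, one_mul, Finsupp.prod_fintype _ _ fun _ => pow_zero _,
    ← Equiv.prod_comp σ (fun k => X k ^ (vandermondeExponent σ k))]
  simp [vandermondeExponent]

theorem det_vandermonde_X_comp (π : Perm (Fin n)) :
    (vandermonde (X ∘ π : Fin n → MvPolynomial (Fin n) R)).det =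
      ∑ σ : Perm (Fin n), monomial (vandermondeExponent σ) ((Perm.sign (π⁻¹ * σ) : ℤ) : R) := by
  rw [det_apply', ← Equiv.sum_comp (Equiv.mulLeft π⁻¹)]
  refine Fintype.sum_congr _ _ fun σ => ?_
  simp only [vandermonde_apply, Function.comp_apply, coe_mulLeft, ← Perm.mul_apply,
    mul_inv_cancel_left, prod_X_pow_eq_monomial_vandermondeExponent]
  rw [← map_intCast (C (σ := Fin n) (R := R)), C_mul_monomial, mul_one]

theorem vandermondeExponent_add_eq_iff (σ τ : Perm (Fin n)) :
    vandermondeExponent σ + vandermondeExponent τ =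
        Finsupp.equivFunOnFinite.symm (fun _ => n - 1) ↔ τ = σ * Fin.revPerm := by
  calc _ ↔ ∀ k, (σ.symm k : ℕ) + τ.symm k = n - 1 := by simp [vandermondeExponent, Finsupp.ext_iff]
    _ ↔ ∀ k, τ.symm k = (σ.symm k).rev :=
      forall_congr' fun k => by rw [Fin.ext_iff, Fin.val_rev]; omega
    _ ↔ τ = σ * Fin.revPerm := by
      rw [← Equiv.symm_bijective.injective.eq_iff, Equiv.ext_iff]
      simp [Perm.mul_def]

theorem coeff_det_vandermonde_mul_det_vandermonde_rev :
    coeff (Finsupp.equivFunOnFinite.symm fun _ => n - 1)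
      ((vandermonde (X : Fin n → MvPolynomial (Fin n) R)).det *
        (vandermonde (X ∘ Fin.revPerm : Fin n → MvPolynomial (Fin n) R)).det) = n.factorial := by
  have det_vandermonde_X := det_vandermonde_X_comp (R := R) (1 : Perm (Fin n))
  simp only [Perm.coe_one, Function.comp_id, inv_one, one_mul] at det_vandermonde_X
  rw [det_vandermonde_X, det_vandermonde_X_comp, sum_mul_sum, coeff_sum]
  simp_rw [monomial_mul, coeff_sum, coeff_monomial, vandermondeExponent_add_eq_iff, sum_ite_eq',
    mem_univ, if_true]
  have sign_conj (σ : Perm (Fin n)) : Perm.sign (Fin.revPerm⁻¹ * (σ * Fin.revPerm)) = Perm.sign σ :=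
    Perm.sign_trans_trans_symm σ Fin.revPerm
  simp_rw [sign_conj, ← Int.cast_mul, ← Units.val_mul, Int.units_mul_self]
  simp [Fintype.card_perm]

theorem coeff_prod_sub_eq_factorial_general (n : ℕ) :
    MvPolynomial.coeff (Finsupp.equivFunOnFinite.symm fun _ : Fin n => n - 1)
      (∏ p ∈ Finset.univ.filter (fun p : Fin n × Fin n => p.1 ≠ p.2),
        (MvPolynomial.X p.1 - MvPolynomial.X p.2) : MvPolynomial (Fin n) ℤ)
      = (n.factorial : ℤ) := by
  rw [prod_offDiag_sub_eq_det_vandermonde_mul]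
  exact coeff_det_vandermonde_mul_det_vandermonde_rev

/-- The coefficient of `X₁^(n-1) ⋯ Xₙ^(n-1)` in `∏_{i ≠ j} (Xᵢ - Xⱼ)` equals `n!`. -/
theorem coeff_prod_sub_eq_factorial (n : ℕ) (hn : 1 ≤ n) :
    MvPolynomial.coeff (Finsupp.equivFunOnFinite.symm fun _ : Fin n => n - 1)
      (∏ p ∈ Finset.univ.filter (fun p : Fin n × Fin n => p.1 ≠ p.2),
        (MvPolynomial.X p.1 - MvPolynomial.X p.2) : MvPolynomial (Fin n) ℤ)
      = (n.factorial : ℤ) :=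
  coeff_prod_sub_eq_factorial_general n
end

section
/- Let $n \ge 1$. In $\mathbb{Z}[X_1,\dots,X_n]$, the polynomial $\prod_{i \neq j} (X_i - X_j) \;-\; n! \cdot \prod_{i=1}^n X_i^{\,n-1}$ (the first product over all ordered pairs $(i,j)$ with $i \neq j$) lies in the ideal generated by $X_1^n, X_2^n, \dots, X_n^n$. Equivalently, in the quotient ring $\mathbb{Z}[X_1,\dots,X_n]/(X_1^n,\dots,X_n^n)$ the image of $\prod_{i\neq j}(X_i - X_j)$ equals $n!$ times the image of $\prod_i X_i^{n-1}$. -/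
/-!
Split `∏_{i ≠ j} (xᵢ - xⱼ)` as `∏_{i<j} (xᵢ - xⱼ) · ∏_{i<j} (xⱼ - xᵢ)`: the second factor is the
Vandermonde determinant of `x`, the first the Vandermonde determinant of `x` with its columns
reversed. Expanding both determinants, the term indexed by `(σ, τ)` is `± ∏ᵢ xᵢ^(n-1-σ(i)+τ(i))`,
which vanishes modulo `(xᵢ^n)` unless `τ ≤ σ` pointwise, and two permutations comparable pointwise
are equal. Each of the `n!` diagonal terms contributes `∏ᵢ xᵢ^(n-1)`.
-/

open Finset Equiv Matrix Nat

section PairProducts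

variable {M ι : Type*} [CommMonoid M] [Fintype ι] [LinearOrder ι] [LocallyFiniteOrderTop ι]

theorem Finset.prod_Ioi_eq_prod_ite (f : ι → ι → M) :
    ∏ i, ∏ j ∈ Ioi i, f i j = ∏ i, ∏ j, if i < j then f i j else 1 := by
  refine prod_congr rfl fun i _ => ?_
  rw [← filter_lt_eq_Ioi, prod_filter]

theorem Finset.prod_filter_ne_eq_prod_Ioi_mul_prod_Ioi (f : ι → ι → M) :
    ∏ p ∈ univ.filter (fun p : ι × ι => p.1 ≠ p.2), f p.1 p.2
      = (∏ i, ∏ j ∈ Ioi i, f i j) * ∏ i, ∏ j ∈ Ioi i, f j i := by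
  have split (i j : ι) : (if i ≠ j then f i j else 1)
      = (if i < j then f i j else 1) * (if j < i then f i j else 1) := by
    rcases lt_trichotomy i j with h | rfl | h
    · simp [h, h.ne, h.not_gt]
    · simp
    · simp [h, h.ne', h.not_gt]
  rw [prod_filter, Fintype.prod_prod_type, prod_Ioi_eq_prod_ite, prod_Ioi_eq_prod_ite,
    prod_comm (f := fun j i => if j < i then f i j else 1)]
  simp only [split, prod_mul_distrib]

end PairProducts

theorem Fin.prod_Ioi_rev {M : Type*} [CommMonoid M] {n : ℕ} (f : Fin n → Fin n → M) :
    ∏ i : Fin n, ∏ j ∈ Ioi i, f j.rev i.rev = ∏ i, ∏ j ∈ Ioi i, f i j := by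
  rw [prod_Ioi_eq_prod_ite, prod_Ioi_eq_prod_ite, prod_comm,
    ← Fintype.prod_equiv Fin.revPerm _ _ fun _ => rfl]
  refine prod_congr rfl fun i _ => Fintype.prod_equiv Fin.revPerm _ _ fun j => ?_
  simp [Fin.lt_rev_iff]

theorem Fin.equiv_eq_of_forall_le {ι : Type*} [Fintype ι] {n : ℕ} {σ τ : ι ≃ Fin n}
    (h : ∀ i, σ i ≤ τ i) : σ = τ := by
  have hsum : ∑ i, (σ i : ℕ) = ∑ i, (τ i : ℕ) := by
    rw [Equiv.sum_comp σ (fun j : Fin n => (j : ℕ)), Equiv.sum_comp τ (fun j : Fin n => (j : ℕ))]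
  ext i
  exact (sum_eq_sum_iff_of_le fun i _ => Fin.le_iff_val_le_val.1 (h i)).1 hsum i (mem_univ i)

section Vandermonde

variable {R : Type*} [CommRing R] {n : ℕ}

theorem Matrix.det_vandermonde_comp_rev (x : Fin n → R) :
    det (vandermonde (x ∘ Fin.rev)) = ∏ i, ∏ j ∈ Ioi i, (x i - x j) :=
  (det_vandermonde _).trans (Fin.prod_Ioi_rev fun i j => x i - x j)

theorem Matrix.det_vandermonde_comp_rev_eq_det_submatrix_rev (x : Fin n → R) :
    det (vandermonde (x ∘ Fin.rev)) = det ((vandermonde x).submatrix id Fin.revPerm) := by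
  -- reversing the rows or the columns both multiply the determinant by `sign Fin.revPerm`
  rw [det_permute', ← det_permute]
  rfl

theorem prod_pow_rev_mul_prod_pow_eq_ite {x : Fin n → R} (hx : ∀ i, x i ^ n = 0)
    (σ τ : Perm (Fin n)) :
    (∏ i, x i ^ ((σ i).rev : ℕ)) * ∏ i, x i ^ (τ i : ℕ)
      = if σ = τ then ∏ i, x i ^ (n - 1) else 0 := by
  rw [← prod_mul_distrib]
  simp_rw [← pow_add, Fin.val_rev]
  split_ifs with h
  · subst h
    refine prod_congr rfl fun i _ => ?_
    have := (σ i).isLt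
    congr 1
    omega
  · obtain ⟨k, hk⟩ : ∃ k, σ k < τ k := by
      by_contra! hle
      exact h (Fin.equiv_eq_of_forall_le hle).symm
    exact prod_eq_zero (mem_univ k) (pow_eq_zero_of_le (by omega) (hx k))

theorem Matrix.det_submatrix_rev_mul_det_vandermonde {x : Fin n → R} (hx : ∀ i, x i ^ n = 0) :
    det ((vandermonde x).submatrix id Fin.revPerm) * det (vandermonde x)
      = n ! * ∏ i, x i ^ (n - 1) := by
  rw [← det_transpose, det_apply', ← det_transpose (vandermonde x), det_apply', sum_mul_sum]
  simp only [transpose_apply, submatrix_apply, vandermonde_apply, id, Fin.revPerm_apply,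
    mul_mul_mul_comm _ (∏ i, _), prod_pow_rev_mul_prod_pow_eq_ite hx, mul_ite, mul_zero,
    sum_ite_eq, mem_univ, if_true, ← Int.cast_mul, ← Units.val_mul, Int.units_mul_self,
    Units.val_one, Int.cast_one, one_mul, sum_const, Finset.card_univ, Fintype.card_perm,
    Fintype.card_fin, nsmul_eq_mul]

theorem prod_ne_sub_eq_factorial_mul {x : Fin n → R} (hx : ∀ i, x i ^ n = 0) :
    ∏ p ∈ univ.filter (fun p : Fin n × Fin n => p.1 ≠ p.2), (x p.1 - x p.2)
      = n ! * ∏ i, x i ^ (n - 1) := by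
  rw [prod_filter_ne_eq_prod_Ioi_mul_prod_Ioi fun i j => x i - x j, ← det_vandermonde_comp_rev,
    ← det_vandermonde, det_vandermonde_comp_rev_eq_det_submatrix_rev,
    det_submatrix_rev_mul_det_vandermonde hx]

end Vandermonde

theorem prod_sub_sub_factorial_mem_ideal_general (n : ℕ) :
    ((∏ p ∈ Finset.univ.filter (fun p : Fin n × Fin n => p.1 ≠ p.2),
        (MvPolynomial.X p.1 - MvPolynomial.X p.2) : MvPolynomial (Fin n) ℤ)
      - (n.factorial : MvPolynomial (Fin n) ℤ) * ∏ i : Fin n, MvPolynomial.X i ^ (n - 1))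
      ∈ Ideal.span (Set.range fun i : Fin n => (MvPolynomial.X i : MvPolynomial (Fin n) ℤ) ^ n) := by
  set I := Ideal.span (Set.range fun i : Fin n => (MvPolynomial.X i : MvPolynomial (Fin n) ℤ) ^ n)
  have hX (i : Fin n) : Ideal.Quotient.mk I (MvPolynomial.X i) ^ n = 0 := by
    rw [← map_pow, Ideal.Quotient.eq_zero_iff_mem]
    exact Ideal.subset_span ⟨i, rfl⟩
  rw [← Ideal.Quotient.eq]
  simp only [map_prod, map_sub, map_mul, map_pow, map_natCast]
  exact prod_ne_sub_eq_factorial_mul hX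

/-- In `ℤ[X₁,…,Xₙ]`, the polynomial `∏_{i ≠ j} (Xᵢ - Xⱼ) - n! ⋅ ∏ᵢ Xᵢ^(n-1)` lies in the
ideal generated by `X₁^n, …, Xₙ^n`. -/
theorem prod_sub_sub_factorial_mem_ideal (n : ℕ) (hn : 1 ≤ n) :
    ((∏ p ∈ Finset.univ.filter (fun p : Fin n × Fin n => p.1 ≠ p.2),
        (MvPolynomial.X p.1 - MvPolynomial.X p.2) : MvPolynomial (Fin n) ℤ)
      - (n.factorial : MvPolynomial (Fin n) ℤ) * ∏ i : Fin n, MvPolynomial.X i ^ (n - 1))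
      ∈ Ideal.span (Set.range fun i : Fin n => (MvPolynomial.X i : MvPolynomial (Fin n) ℤ) ^ n) :=
  prod_sub_sub_factorial_mem_ideal_general n
end

section
/- Let $n \ge 1$ and let $V(X)$ be the $n \times n$ Vandermonde matrix over $\mathbb{Z}[X_1,\dots,X_n]$ with $(i,j)$ entry $X_i^{\,j}$, $0 \le j \le n-1$. Then $\big(\det V(X)\big)^2 \;-\; (-1)^{n(n-1)/2}\, n! \cdot \prod_{i=1}^n X_i^{\,n-1}$ lies in the ideal of $\mathbb{Z}[X_1,\dots,X_n]$ generated by $X_1^n,\dots,X_n^n$. -/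
/-!
Expanding both factors, `det V(x)² = ∑_{σ,τ} sgn σ sgn τ ∏ᵢ xᵢ^(σ i + τ i)`. Since `σ` and `τ`
each take every value in `{0, …, n-1}` once, the exponents sum to `n(n-1)`; so unless every
`σ i + τ i` equals `n - 1`, some exponent is at least `n` and the term lies in the ideal.
The surviving pairs are `τ = rev ∘ σ`, one per `σ`, each contributing
`sgn rev ∏ᵢ xᵢ^(n-1)` with `sgn rev = (-1)^(n(n-1)/2)`.
-/

open Equiv Finset

namespace Fin

theorem finRotate_mul_revPerm (n : ℕ) :
    finRotate (n + 1) * revPerm = Perm.decomposeFin.symm (0, revPerm) := by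
  ext i
  refine Fin.cases ?_ (fun j => ?_) i
  · simp
  · simp [rev_succ]

theorem sign_revPerm (n : ℕ) : Perm.sign (revPerm : Perm (Fin n)) = (-1) ^ (n * (n - 1) / 2) := by
  rw [← sum_range_id]
  induction n with
  | zero => rfl
  | succ n ih =>
    have h := congrArg Perm.sign (finRotate_mul_revPerm n)
    rw [map_mul, sign_finRotate, Nat.succ_sub_one, Perm.decomposeFin.symm_sign, ih, if_pos rfl,
      one_mul] at h
    rw [sum_range_succ, pow_add, ← h, mul_comm, ← mul_assoc, ← pow_add, ← two_mul, pow_mul]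
    simp

theorem sign_mul_sign_revPerm_mul {n : ℕ} (σ : Perm (Fin n)) :
    Perm.sign σ * Perm.sign (revPerm * σ) = (-1) ^ (n * (n - 1) / 2) := by
  rw [map_mul, sign_revPerm, mul_left_comm, Int.units_mul_self, mul_one]

theorem val_add_val_revPerm_mul {n : ℕ} (σ : Perm (Fin n)) (i : Fin n) :
    (σ i : ℕ) + (revPerm * σ : Perm (Fin n)) i = n - 1 := by
  rw [Perm.mul_apply, revPerm_apply, val_rev]
  have := (σ i).is_lt
  omega

theorem perm_eq_of_forall_le {n : ℕ} {σ τ : Perm (Fin n)} (h : ∀ i, σ i ≤ τ i) : σ = τ := by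
  have hsum : ∑ i, (σ i : ℕ) = ∑ i, (τ i : ℕ) := by
    rw [Equiv.sum_comp σ (fun i => (i : ℕ)), Equiv.sum_comp τ (fun i => (i : ℕ))]
  have hval := (sum_eq_sum_iff_of_le (f := fun i => (σ i : ℕ)) fun i _ => h i).1 hsum
  exact Equiv.ext fun i => Fin.ext (hval i (mem_univ i))

theorem eq_revPerm_mul_of_forall_add_lt {n : ℕ} {σ τ : Perm (Fin n)}
    (h : ∀ i, (σ i : ℕ) + τ i < n) : τ = revPerm * σ :=
  perm_eq_of_forall_le fun i => by
    rw [Fin.le_iff_val_le_val, Perm.mul_apply, revPerm_apply, val_rev]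
    have := h i
    omega

end Fin

theorem Matrix.det_vandermonde_eq_sum_sign {R : Type*} [CommRing R] {n : ℕ} (v : Fin n → R) :
    (vandermonde v).det = ∑ σ : Perm (Fin n), (Perm.sign σ : R) * ∏ i, v i ^ (σ i : ℕ) := by
  rw [← det_transpose, det_apply']
  rfl

theorem Matrix.det_vandermonde_sq_eq_sum {R : Type*} [CommRing R] {n : ℕ} (v : Fin n → R) :
    (vandermonde v).det ^ 2 = ∑ σ : Perm (Fin n), ∑ τ : Perm (Fin n),
      (Perm.sign σ : R) * Perm.sign τ * ∏ i, v i ^ ((σ i : ℕ) + τ i) := by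
  simp only [sq, det_vandermonde_eq_sum_sign, sum_mul_sum, pow_add, prod_mul_distrib]
  exact sum_congr rfl fun σ _ => sum_congr rfl fun τ _ => by ring

theorem Ideal.prod_pow_mem_span_range_pow {ι R : Type*} [CommSemiring R] [Fintype ι]
    (x : ι → R) {e : ι → ℕ} {m : ℕ} {j : ι} (hj : m ≤ e j) :
    ∏ i, x i ^ e i ∈ Ideal.span (Set.range fun i => x i ^ m) :=
  Ideal.mem_of_dvd _ ((pow_dvd_pow _ hj).trans (dvd_prod_of_mem _ (mem_univ j)))
    (Ideal.subset_span ⟨j, rfl⟩)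

theorem Matrix.det_vandermonde_sq_sub_mem_span_pow {R : Type*} [CommRing R] {n : ℕ}
    (x : Fin n → R) :
    (vandermonde x).det ^ 2 - (-1 : R) ^ (n * (n - 1) / 2) * (n.factorial : R)
        * ∏ i, x i ^ (n - 1) ∈ Ideal.span (Set.range fun i => x i ^ n) := by
  set I := Ideal.span (Set.range fun i => x i ^ n)
  rw [← Ideal.Quotient.eq]
  have hvanish (σ τ : Perm (Fin n)) (hτ : τ ≠ Fin.revPerm * σ) :
      Ideal.Quotient.mk I (∏ i, x i ^ ((σ i : ℕ) + τ i)) = 0 := by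
    obtain ⟨j, hj⟩ : ∃ j, n ≤ (σ j : ℕ) + τ j := by
      by_contra! h
      exact hτ (Fin.eq_revPerm_mul_of_forall_add_lt h)
    exact Ideal.Quotient.eq_zero_iff_mem.2 (Ideal.prod_pow_mem_span_range_pow x hj)
  have hdiag (σ : Perm (Fin n)) :
      (Perm.sign σ : R) * Perm.sign (Fin.revPerm * σ)
          * ∏ i, x i ^ ((σ i : ℕ) + (Fin.revPerm * σ : Perm (Fin n)) i)
        = (-1 : R) ^ (n * (n - 1) / 2) * ∏ i, x i ^ (n - 1) := by
    simp only [Fin.val_add_val_revPerm_mul]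
    congr 1
    exact_mod_cast congrArg (fun u : ℤˣ => ((u : ℤ) : R)) (Fin.sign_mul_sign_revPerm_mul σ)
  calc Ideal.Quotient.mk I ((vandermonde x).det ^ 2)
      = ∑ σ : Perm (Fin n), ∑ τ : Perm (Fin n), Ideal.Quotient.mk I
          ((Perm.sign σ : R) * Perm.sign τ * ∏ i, x i ^ ((σ i : ℕ) + τ i)) := by
        simp only [det_vandermonde_sq_eq_sum, map_sum]
    _ = ∑ σ : Perm (Fin n),
          Ideal.Quotient.mk I ((-1 : R) ^ (n * (n - 1) / 2) * ∏ i, x i ^ (n - 1)) := by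
        refine sum_congr rfl fun σ _ => ?_
        rw [Fintype.sum_eq_single (Fin.revPerm * σ) fun τ hτ => ?_, hdiag]
        rw [map_mul, hvanish σ τ hτ, mul_zero]
    _ = _ := by
        rw [sum_const, card_univ, Fintype.card_perm, Fintype.card_fin, nsmul_eq_mul]
        simp only [map_mul, map_pow, map_neg, map_one, map_natCast]
        ring

theorem det_vandermonde_sq_sub_mem_ideal_general (n : ℕ) :
    ((Matrix.vandermonde fun i : Fin n => (MvPolynomial.X i : MvPolynomial (Fin n) ℤ)).det ^ 2
      - (-1 : MvPolynomial (Fin n) ℤ) ^ (n * (n - 1) / 2) * (n.factorial : MvPolynomial (Fin n) ℤ)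
          * ∏ i : Fin n, MvPolynomial.X i ^ (n - 1))
      ∈ Ideal.span (Set.range fun i : Fin n => (MvPolynomial.X i : MvPolynomial (Fin n) ℤ) ^ n) :=
  Matrix.det_vandermonde_sq_sub_mem_span_pow _

/-- The square of the Vandermonde determinant is congruent to
`(-1)^(n(n-1)/2) ⋅ n! ⋅ ∏ᵢ Xᵢ^(n-1)` modulo the ideal `(X₁^n, …, Xₙ^n)` of `ℤ[X₁,…,Xₙ]`. -/
theorem det_vandermonde_sq_sub_mem_ideal (n : ℕ) (hn : 1 ≤ n) :
    ((Matrix.vandermonde fun i : Fin n => (MvPolynomial.X i : MvPolynomial (Fin n) ℤ)).det ^ 2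
      - (-1 : MvPolynomial (Fin n) ℤ) ^ (n * (n - 1) / 2) * (n.factorial : MvPolynomial (Fin n) ℤ)
          * ∏ i : Fin n, MvPolynomial.X i ^ (n - 1))
      ∈ Ideal.span (Set.range fun i : Fin n => (MvPolynomial.X i : MvPolynomial (Fin n) ℤ) ^ n) :=
  det_vandermonde_sq_sub_mem_ideal_general n
end
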